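/- Let T be the tree on 10 vertices consisting of a path u₁, u₂, u₃, u₄, u₅, u₆ together with four additional leaves w₂, w₃, w₄, w₅, where w_i is adjacent to u_i for i = 2, 3, 4, 5. Then there is no friendly vertex labeling f: V(T) → {0,1} for which exactly 3 of the 9 edges of T have both endpoints with the same label. -/
import Mathlib


open Finset

/-- A vertex labeling `f : V → {0,1}` is friendly if the number of vertices labeled `0`
and the number labeled `1` differ by at most `1`. -/
def Friendly {V : Type*} [Fintype V] [DecidableEq V] (f : V → Fin 2) : Prop :=
  |((univ.filter fun v => f v = 0).card : ℤ) - ((univ.filter fun v => f v = 1).card : ℤ)| ≤ 1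

/-- The 9 edges of the tree `T` on 10 vertices: the path `u₁u₂u₃u₄u₅u₆`
(vertices `0, …, 5 : Fin 10`) together with leaves `w₂, w₃, w₄, w₅`
(vertices `6, 7, 8, 9`), where `wᵢ` is adjacent to `uᵢ`. -/
def treeEdges : Fin 9 → Fin 10 × Fin 10 :=
  ![(0, 1), (1, 2), (2, 3), (3, 4), (4, 5), (1, 6), (2, 7), (3, 8), (4, 9)]

set_option maxRecDepth 4000 in
theorem aux : ∀ a b c d e g h i j k : Fin 2,
    ¬ (Friendly ![a,b,c,d,e,g,h,i,j,k] ∧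
      ((univ : Finset (Fin 9)).filter fun n =>
        (![a,b,c,d,e,g,h,i,j,k] : Fin 10 → Fin 2) (treeEdges n).1 =
        (![a,b,c,d,e,g,h,i,j,k] : Fin 10 → Fin 2) (treeEdges n).2).card = 3) := by
  unfold Friendly
  decide

/-- There is no friendly vertex labeling of the caterpillar tree `T` under which
exactly 3 of its 9 edges are monochromatic (have both endpoints with the same label). -/
theorem tree_no_friendly_three_monochromatic :
    ¬ ∃ f : Fin 10 → Fin 2, Friendly f ∧
      ((univ : Finset (Fin 9)).filter fun i =>
        f (treeEdges i).1 = f (treeEdges i).2).card = 3 := by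
  rintro ⟨f, hf⟩
  have hfe : f = ![f 0, f 1, f 2, f 3, f 4, f 5, f 6, f 7, f 8, f 9] := by
    funext x; fin_cases x <;> rfl
  rw [hfe] at hf
  exact aux (f 0) (f 1) (f 2) (f 3) (f 4) (f 5) (f 6) (f 7) (f 8) (f 9) hf
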